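/- Let G and G' be topologically sorted DAGs on the same node set Fin n. Then p_G = p_{G'} if and only if loc(G) ∩ {positive definite matrices} = loc(G') ∩ {positive definite matrices}; that is, the saturated ideals coincide exactly when the two models admit the same non-singular Gaussian covariance matrices. -/

import Mathlib

open MvPolynomial Matrix

noncomputable section

/-- The parent set of a node `j` in the DAG with edge relation `E`. -/
def parents {n : ℕ} (E : Fin n → Fin n → Prop) [DecidableRel E] (j : Fin n) : Finset (Fin n) :=
  Finset.univ.filter (fun i => E i j)

/-- The minor of `M` with rows `A` and columns `B`, each listed in increasing order. -/
def fminor {n : ℕ} {R : Type*} [CommRing R] (M : Matrix (Fin n) (Fin n) R)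
    (A B : Finset (Fin n)) (h : B.card = A.card) : R :=
  Matrix.det (Matrix.of fun k l : Fin A.card =>
    M (A.orderEmbOfFin rfl k) (B.orderEmbOfFin h l))

/-- The generic symmetric matrix, with `(i,j)` entry the variable indexed by the unordered
pair `s(i,j)`. -/
def genMat (n : ℕ) : Matrix (Fin n) (Fin n) (MvPolynomial (Sym2 (Fin n)) ℂ) :=
  fun i j => X (Sym2.mk i j)

/-- The ideal of imposed relations `I_G`, generated by the minors `det M_{{i}∪K,{j}∪K}` over all
pairs `i < j` with `¬ E i j`, where `K = pa(j)`. -/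
def impIdeal {n : ℕ} (E : Fin n → Fin n → Prop) [DecidableRel E] :
    Ideal (MvPolynomial (Sym2 (Fin n)) ℂ) :=
  Ideal.span { f | ∃ i j : Fin n, ∃ _ : i < j, ∃ _ : ¬ E i j,
    ∃ h : (insert j (parents E j)).card = (insert i (parents E j)).card,
      f = fminor (genMat n) (insert i (parents E j)) (insert j (parents E j)) h }

/-- The product `θ₀` of all principal minors of the generic symmetric matrix. -/
def theta0 (n : ℕ) : MvPolynomial (Sym2 (Fin n)) ℂ :=
  ∏ A : Finset (Fin n), fminor (genMat n) A A rfl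

/-- The saturation `{f | ∃ m, g ^ m * f ∈ I}` of an ideal `I` at an element `g`. -/
def satIdeal {R : Type*} [CommRing R] (I : Ideal R) (g : R) : Ideal R where
  carrier := {f | ∃ m : ℕ, g ^ m * f ∈ I}
  zero_mem' := ⟨0, by simp⟩
  add_mem' := by
    rintro a b ⟨ma, ha⟩ ⟨mb, hb⟩
    refine ⟨ma + mb, ?_⟩
    have h : g ^ (ma + mb) * (a + b) = g ^ mb * (g ^ ma * a) + g ^ ma * (g ^ mb * b) := by
      ring
    rw [h]
    exact I.add_mem (I.mul_mem_left _ ha) (I.mul_mem_left _ hb)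
  smul_mem' := by
    rintro c a ⟨m, hm⟩
    refine ⟨m, ?_⟩
    have h : g ^ m * (c • a) = c * (g ^ m * a) := by
      simp only [smul_eq_mul]; ring
    rw [h]
    exact I.mul_mem_left _ hm

/-- The saturation `p_G` of `I_G` at `θ₀`. -/
def satPG {n : ℕ} (E : Fin n → Fin n → Prop) [DecidableRel E] :
    Ideal (MvPolynomial (Sym2 (Fin n)) ℂ) :=
  satIdeal (impIdeal E) (theta0 n)

/-- The rank of the submatrix of `σ` with rows `A` and columns `B`. -/
def subRank {n : ℕ} (σ : Matrix (Fin n) (Fin n) ℝ) (A B : Finset (Fin n)) : ℕ :=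
  (σ.submatrix (fun a : A => (a : Fin n)) (fun b : B => (b : Fin n))).rank

/-- `loc(G)`: positive semidefinite matrices satisfying the rank conditions of the local
Markov relations of the DAG `G`. -/
def locSet {n : ℕ} (E : Fin n → Fin n → Prop) [DecidableRel E] :
    Set (Matrix (Fin n) (Fin n) ℝ) :=
  {σ | σ.PosSemidef ∧ ∀ i j : Fin n, i < j → ¬ E i j →
    subRank σ (insert i (parents E j)) (insert j (parents E j)) =
      subRank σ (parents E j) (parents E j)}

/-!
Both sides are equivalent to `E = E'`. For an edge `i → j` of `E`, the covariance matrix `S` of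
the one-edge model `i → j` is positive definite and lies in `loc(E)`: on the rows `r < b`, column
`b` of `S` is column `i` of `S` or zero, so every minor `det S_{{a}∪K,{b}∪K}` with `(a, b) ≠ (i, j)`
and `K < b` vanishes. As all principal minors of `S` are positive, `θ₀(S) ≠ 0`, so every element
of `p_E` vanishes at `S`. If `i → j` is not an edge of `E'`, then with `K = pa_{E'}(j)` the matrix
`S_{{i}∪K,{j}∪K}` is a permutation matrix, so this generator of `I_{E'} ⊆ p_{E'}` does not vanish
at `S` and the rank condition of `loc(E')` for `(i, j)` fails.
-/

theorem Matrix.rank_eq_card_iff_det_ne_zero {m K : Type*} [Fintype m] [DecidableEq m] [Field K]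
    (A : Matrix m m K) : A.rank = Fintype.card m ↔ A.det ≠ 0 := by
  refine ⟨fun h => ?_, rank_of_det_ne_zero⟩
  have hrange : LinearMap.range A.mulVecLin = ⊤ :=
    Submodule.eq_top_of_finrank_eq (by rw [← rank, h, Module.finrank_fintype_fun_eq_card])
  rw [← isUnit_iff_ne_zero, ← isUnit_iff_isUnit_det, ← mulVec_surjective_iff_isUnit]
  exact LinearMap.range_eq_top.mp hrange

theorem le_satIdeal {R : Type*} [CommRing R] (I : Ideal R) (g : R) : I ≤ satIdeal I g :=
  fun f hf => ⟨0, by simpa using hf⟩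

section Parents

variable {n : ℕ} {E : Fin n → Fin n → Prop} [DecidableRel E]

theorem mem_parents {i j : Fin n} : i ∈ parents E j ↔ E i j := by
  simp [parents]

theorem notMem_parents_self (hE : ∀ i j, E i j → i < j) (j : Fin n) : j ∉ parents E j :=
  fun h => (hE j j (mem_parents.mp h)).false

end Parents

section SubRank

variable {n : ℕ}

theorem fminor_ne_zero_iff (σ : Matrix (Fin n) (Fin n) ℝ) (A B : Finset (Fin n))
    (h : B.card = A.card) : fminor σ A B h ≠ 0 ↔ subRank σ A B = A.card := by
  have hsub : subRank σ A B = (σ.submatrix (A.orderEmbOfFin rfl) (B.orderEmbOfFin h)).rank := by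
    rw [subRank, ← rank_submatrix _ (A.orderIsoOfFin rfl).toEquiv (B.orderIsoOfFin h).toEquiv]
    rfl
  have hdet := rank_eq_card_iff_det_ne_zero (σ.submatrix (A.orderEmbOfFin rfl) (B.orderEmbOfFin h))
  rw [Fintype.card_fin] at hdet
  rw [hsub, hdet]
  rfl

theorem subRank_le_card_left (σ : Matrix (Fin n) (Fin n) ℝ) (A B : Finset (Fin n)) :
    subRank σ A B ≤ A.card :=
  (rank_le_card_height _).trans_eq (Fintype.card_coe A)

theorem subRank_le_subRank_insert (σ : Matrix (Fin n) (Fin n) ℝ) (K : Finset (Fin n))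
    (a b : Fin n) : subRank σ K K ≤ subRank σ (insert a K) (insert b K) := by
  let ι : ∀ c : Fin n, K → (insert c K : Finset (Fin n)) :=
    fun _ k => ⟨k, Finset.mem_insert_of_mem k.2⟩
  exact rank_submatrix_le (σ.submatrix (fun r : (insert a K : Finset (Fin n)) => (r : Fin n))
    (fun l : (insert b K : Finset (Fin n)) => (l : Fin n))) (ι a) (ι b)

theorem Matrix.PosDef.subRank_self {σ : Matrix (Fin n) (Fin n) ℝ} (hσ : σ.PosDef)
    (A : Finset (Fin n)) : subRank σ A A = A.card := by
  rw [subRank, rank_of_isUnit _ (hσ.submatrix Subtype.val_injective).isUnit, Fintype.card_coe]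

theorem subRank_insert_le_card {σ : Matrix (Fin n) (Fin n) ℝ} {R K : Finset (Fin n)} {b : Fin n}
    (c : Fin n → ℝ) (hc : ∀ r ∈ R, σ r b = ∑ k ∈ K, c k * σ r k) :
    subRank σ R (insert b K) ≤ K.card := by
  let T : Matrix K (insert b K : Finset (Fin n)) ℝ := Matrix.of fun k l =>
    if (l : Fin n) = b then c k else if (k : Fin n) = l then 1 else 0
  have hfactor : σ.submatrix (fun r : R => (r : Fin n)) (fun l : (insert b K : Finset _) => l) =
      σ.submatrix (fun r : R => (r : Fin n)) (fun k : K => (k : Fin n)) * T := by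
    ext r l
    simp only [submatrix_apply, mul_apply, T, of_apply]
    by_cases hl : (l : Fin n) = b
    · simp only [hl, if_true, hc r r.2, mul_comm (c _)]
      exact (Finset.sum_coe_sort K fun k => σ r k * c k).symm
    · have hlK : (l : Fin n) ∈ K := (Finset.mem_insert.mp l.2).resolve_left hl
      simp only [hl, if_false, mul_ite, mul_one, mul_zero]
      rw [Finset.sum_eq_single (⟨l, hlK⟩ : K) (fun k _ hk => if_neg fun h => hk (Subtype.ext h))
        (by simp)]
      simp
  rw [subRank, hfactor]
  exact (rank_mul_le_left _ _).trans ((rank_le_card_width _).trans_eq (Fintype.card_coe K))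

theorem subRank_insert_eq_self_iff_fminor_eq_zero {σ : Matrix (Fin n) (Fin n) ℝ} (hσ : σ.PosDef)
    {K : Finset (Fin n)} {a : Fin n} (ha : a ∉ K) (b : Fin n)
    (h : (insert b K).card = (insert a K).card) :
    subRank σ (insert a K) (insert b K) = subRank σ K K ↔
      fminor σ (insert a K) (insert b K) h = 0 := by
  have hupper := subRank_le_card_left σ (insert a K) (insert b K)
  have hlower := subRank_le_subRank_insert σ K a b
  rw [← not_iff_not, ← ne_eq, ← ne_eq, fminor_ne_zero_iff]
  rw [hσ.subRank_self, Finset.card_insert_of_notMem ha] at *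
  omega

end SubRank

section Evaluation

variable {n : ℕ}

def symEval (σ : Matrix (Fin n) (Fin n) ℝ) (hσ : σ.IsSymm) : Sym2 (Fin n) → ℂ :=
  Sym2.lift ⟨fun a b => σ a b, fun a b => by dsimp only; rw [hσ.apply a b]⟩

theorem aeval_symEval_fminor {σ : Matrix (Fin n) (Fin n) ℝ} (hσ : σ.IsSymm)
    (A B : Finset (Fin n)) (h : B.card = A.card) :
    aeval (symEval σ hσ) (fminor (genMat n) A B h) = ((fminor σ A B h : ℝ) : ℂ) := by
  rw [fminor, fminor, AlgHom.map_det, ← Complex.ofRealHom_eq_coe, RingHom.map_det]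
  congr 1
  ext k l
  simp [genMat, symEval]

theorem aeval_symEval_eq_zero_of_mem_satPG {E : Fin n → Fin n → Prop} [DecidableRel E]
    {σ : Matrix (Fin n) (Fin n) ℝ} (hσ : σ ∈ locSet E) (hpd : σ.PosDef)
    {f : MvPolynomial (Sym2 (Fin n)) ℂ} (hf : f ∈ satPG E) :
    aeval (symEval σ (isHermitian_iff_isSymm.mp hpd.isHermitian)) f = 0 := by
  set ev := aeval (R := ℂ) (symEval σ (isHermitian_iff_isSymm.mp hpd.isHermitian))
  have hideal : impIdeal E ≤ RingHom.ker ev := by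
    rw [impIdeal, Ideal.span_le]
    rintro _ ⟨a, b, hab, hEab, hcard, rfl⟩
    have ha : a ∉ parents E b := fun h => hEab (mem_parents.mp h)
    rw [SetLike.mem_coe, RingHom.mem_ker, aeval_symEval_fminor,
      Complex.ofReal_eq_zero, ← subRank_insert_eq_self_iff_fminor_eq_zero hpd ha]
    exact hσ.2 a b hab hEab
  have htheta : ev (theta0 n) ≠ 0 := by
    rw [theta0, map_prod, Finset.prod_ne_zero_iff]
    intro A _
    rw [aeval_symEval_fminor, Complex.ofReal_ne_zero, fminor_ne_zero_iff, hpd.subRank_self]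
  obtain ⟨m, hm⟩ := hf
  have := hideal hm
  rw [RingHom.mem_ker, map_mul, map_pow] at this
  exact (mul_eq_zero.mp this).resolve_left (pow_ne_zero m htheta)

end Evaluation

section Witness

variable {n : ℕ}

/-- The covariance `(1 + Λ)(1 + Λ)ᵀ` of the Gaussian model `X_j = X_i + noise` of the one-edge DAG
`i → j`, with unit noise variances. -/
def singleEdgeCov (i j : Fin n) : Matrix (Fin n) (Fin n) ℝ :=
  (1 + single j i 1) * (1 + single j i 1)ᵀ

theorem singleEdgeCov_eq (i j : Fin n) :
    singleEdgeCov i j = 1 + single i j 1 + single j i 1 + single j j 1 := by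
  simp only [singleEdgeCov, transpose_add, transpose_one, transpose_single, add_mul, mul_add,
    mul_one, one_mul, single_mul_single_same]
  abel

theorem singleEdgeCov_posDef {i j : Fin n} (hij : i ≠ j) : (singleEdgeCov i j).PosDef := by
  have hunit : IsUnit (1 + single j i (1 : ℝ)) :=
    .of_mul_eq_one (1 - single j i 1) (by simp [mul_sub, add_mul, hij])
  rw [singleEdgeCov, ← conjTranspose_eq_transpose_of_trivial]
  exact PosDef.mul_conjTranspose_self _ (vecMul_injective_iff_isUnit.mpr hunit)

theorem singleEdgeCov_apply (i j a b : Fin n) :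
    singleEdgeCov i j a b = (if a = b then 1 else 0) + (if a = i ∧ b = j then 1 else 0) +
      (if a = j ∧ b = i then 1 else 0) + (if a = j ∧ b = j then 1 else 0) := by
  simp [singleEdgeCov_eq, one_apply, single_apply, eq_comm]

theorem singleEdgeCov_apply_swap {i j r r' : Fin n} (hr : r ≠ j) (hr' : r' ≠ j) :
    singleEdgeCov i j r (Equiv.swap i j r') = if r = r' then 1 else 0 := by
  rw [singleEdgeCov_apply, Equiv.swap_apply_def]
  grind

theorem subRank_singleEdgeCov_insert {i j : Fin n} (hij : i ≠ j) {K : Finset (Fin n)}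
    (hi : i ∉ K) (hj : j ∉ K) :
    subRank (singleEdgeCov i j) (insert i K) (insert j K) = K.card + 1 := by
  have hswap : ∀ a, a ∈ insert i K ↔ Equiv.swap i j a ∈ insert j K := fun a => by
    rw [Equiv.swap_apply_def]
    grind
  have hne : ∀ a ∈ insert i K, a ≠ j := by grind
  let e := (Equiv.swap i j).subtypeEquiv hswap
  have hone : ((singleEdgeCov i j).submatrix (fun r : (insert i K : Finset (Fin n)) => (r : Fin n))
      (fun l : (insert j K : Finset (Fin n)) => (l : Fin n))).submatrix (Equiv.refl _) e = 1 := by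
    ext r r'
    change singleEdgeCov i j r (Equiv.swap i j r') = (1 : Matrix _ _ ℝ) r r'
    simp only [singleEdgeCov_apply_swap (hne r r.2) (hne r' r'.2), one_apply, Subtype.ext_iff]
  rw [subRank, ← rank_submatrix _ (Equiv.refl _) e, hone, rank_one, Fintype.card_coe,
    Finset.card_insert_of_notMem hi]

theorem subRank_singleEdgeCov_insert_le {i j a b : Fin n} (hij : i < j) (hab : a < b)
    (hne : ¬(a = i ∧ b = j)) {K : Finset (Fin n)} (hK : ∀ k ∈ K, k < b) :
    subRank (singleEdgeCov i j) (insert a K) (insert b K) ≤ K.card := by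
  -- on the rows `r < b`, column `b` is column `i` if `b = j`, and zero otherwise
  refine subRank_insert_le_card (fun k => if k = i ∧ b = j then 1 else 0) fun r hr => ?_
  have hrb : r < b := by grind
  rw [Finset.sum_eq_single i (fun k _ hk => by simp [hk]) (fun hiK => ?_)] <;>
    simp only [singleEdgeCov_apply] <;> grind

end Witness

section Model

variable {n : ℕ} {E E' : Fin n → Fin n → Prop} [DecidableRel E] [DecidableRel E']

theorem singleEdgeCov_mem_locSet (hE : ∀ i j, E i j → i < j) {i j : Fin n} (hij : E i j) :
    singleEdgeCov i j ∈ locSet E := by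
  have hpd := singleEdgeCov_posDef (hE i j hij).ne
  refine ⟨hpd.posSemidef, fun a b hab hEab => le_antisymm ?_ (subRank_le_subRank_insert _ _ a b)⟩
  rw [hpd.subRank_self]
  exact subRank_singleEdgeCov_insert_le (hE i j hij) hab (fun ⟨hai, hbj⟩ => hEab (hai ▸ hbj ▸ hij))
    fun k hk => hE k b (mem_parents.mp hk)

theorem subRank_singleEdgeCov_ne_of_not_edge (hE : ∀ i j, E i j → i < j) {i j : Fin n}
    (hij : i < j) (hEij : ¬E i j) :
    subRank (singleEdgeCov i j) (insert i (parents E j)) (insert j (parents E j)) ≠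
      subRank (singleEdgeCov i j) (parents E j) (parents E j) := by
  rw [subRank_singleEdgeCov_insert hij.ne (fun h => hEij (mem_parents.mp h))
    (notMem_parents_self hE j), (singleEdgeCov_posDef hij.ne).subRank_self]
  omega

theorem edge_of_locSet_inter_posDef_eq (hE : ∀ i j, E i j → i < j)
    (hE' : ∀ i j, E' i j → i < j)
    (h : locSet E ∩ {σ | σ.PosDef} = locSet E' ∩ {σ | σ.PosDef}) {i j : Fin n} (hij : E i j) :
    E' i j := by
  by_contra hE'ij
  have hmem : singleEdgeCov i j ∈ locSet E' ∩ {σ | σ.PosDef} :=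
    h ▸ ⟨singleEdgeCov_mem_locSet hE hij, singleEdgeCov_posDef (hE i j hij).ne⟩
  exact subRank_singleEdgeCov_ne_of_not_edge hE' (hE i j hij) hE'ij
    (hmem.1.2 i j (hE i j hij) hE'ij)

theorem edge_of_satPG_eq (hE : ∀ i j, E i j → i < j) (hE' : ∀ i j, E' i j → i < j)
    (h : satPG E = satPG E') {i j : Fin n} (hij : E i j) : E' i j := by
  by_contra hE'ij
  have hlt := hE i j hij
  have hpd := singleEdgeCov_posDef hlt.ne
  have hi : i ∉ parents E' j := fun h => hE'ij (mem_parents.mp h)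
  have hcard : (insert j (parents E' j)).card = (insert i (parents E' j)).card := by
    rw [Finset.card_insert_of_notMem hi, Finset.card_insert_of_notMem (notMem_parents_self hE' j)]
  have hgen : fminor (genMat n) (insert i (parents E' j)) (insert j (parents E' j)) hcard ∈
      satPG E :=
    h ▸ le_satIdeal _ _ (Ideal.subset_span ⟨i, j, hlt, hE'ij, hcard, rfl⟩)
  have hzero := aeval_symEval_eq_zero_of_mem_satPG (singleEdgeCov_mem_locSet hE hij) hpd hgen
  rw [aeval_symEval_fminor, Complex.ofReal_eq_zero,
    ← subRank_insert_eq_self_iff_fminor_eq_zero hpd hi] at hzero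
  exact subRank_singleEdgeCov_ne_of_not_edge hE' hlt hE'ij hzero

end Model

theorem satPG_eq_iff_locSet_posDef_eq_general {n : ℕ}
    (E : Fin n → Fin n → Prop) [DecidableRel E] (hE : ∀ i j, E i j → i < j)
    (E' : Fin n → Fin n → Prop) [DecidableRel E'] (hE' : ∀ i j, E' i j → i < j) :
    satPG E = satPG E' ↔
      locSet E ∩ {σ | σ.PosDef} = locSet E' ∩ {σ | σ.PosDef} := by
  constructor
  · intro h
    obtain rfl : E = E' := funext₂ fun _ _ =>
      propext ⟨edge_of_satPG_eq hE hE' h, edge_of_satPG_eq hE' hE h.symm⟩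
    -- the two `DecidableRel` instances on `E` agree as a subsingleton
    congr!
  · intro h
    obtain rfl : E = E' := funext₂ fun _ _ => propext
      ⟨edge_of_locSet_inter_posDef_eq hE hE' h, edge_of_locSet_inter_posDef_eq hE' hE h.symm⟩
    congr!

/-- Proposition 6 of the paper: the saturated ideals of two DAGs coincide exactly when the two
models admit the same non-singular Gaussian covariance matrices. -/
theorem satPG_eq_iff_locSet_posDef_eq {n : ℕ} (hn : 1 ≤ n)
    (E : Fin n → Fin n → Prop) [DecidableRel E] (hE : ∀ i j, E i j → i < j)
    (E' : Fin n → Fin n → Prop) [DecidableRel E'] (hE' : ∀ i j, E' i j → i < j) :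
    satPG E = satPG E' ↔
      locSet E ∩ {σ | σ.PosDef} = locSet E' ∩ {σ | σ.PosDef} :=
  satPG_eq_iff_locSet_posDef_eq_general E hE E' hE'
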